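/- Let K be an algebraically closed field of characteristic 0 and t ∈ K with t ≠ −2. The alternating bilinear bracket on K⁹ with basis e₁,…,e₉ determined by [e₁, e_i] = e_{i+1} for 2 ≤ i ≤ 8; [e₂, e₃] = e₅; [e₂, e₄] = e₆; [e₂, e₅] = (1−t)·e₇; [e₃, e₄] = t·e₇; [e₂, e₆] = (1−2t)·e₈; [e₃, e₅] = t·e₈; [e₂, e₇] = ((2−5t)/(2+t))·e₉; [e₃, e₆] = ((2t−2t²)/(2+t))·e₉; [e₄, e₅] = (3t²/(2+t))·e₉; and [e_i, e_j] = 0 for all other pairs i < j, satisfies the Jacobi identity, hence defines a Lie algebra f₉(t). -/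

import Mathlib

/-- The basis vector `e_{p+1}` of `K⁹` (0-based index `p`). -/
def stdVec9 (K : Type) [Field K] (p : ℕ) : Fin 9 → K :=
  fun k => if (k : ℕ) = p then 1 else 0

/-- The values `[e_{i+1}, e_{j+1}]` (0-based `i < j`) of the bracket of `f₉(t)`. -/
noncomputable def f9Val {K : Type} [Field K] (t : K) (i j : ℕ) : Fin 9 → K :=
  if i = 0 ∧ 1 ≤ j ∧ j ≤ 7 then stdVec9 K (j + 1)          -- [e₁,e_i] = e_{i+1}, 2 ≤ i ≤ 8
  else if i = 1 ∧ j = 2 then stdVec9 K 4                    -- [e₂,e₃] = e₅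
  else if i = 1 ∧ j = 3 then stdVec9 K 5                    -- [e₂,e₄] = e₆
  else if i = 1 ∧ j = 4 then (1 - t) • stdVec9 K 6          -- [e₂,e₅] = (1−t)e₇
  else if i = 2 ∧ j = 3 then t • stdVec9 K 6                -- [e₃,e₄] = t·e₇
  else if i = 1 ∧ j = 5 then (1 - 2 * t) • stdVec9 K 7      -- [e₂,e₆] = (1−2t)e₈
  else if i = 2 ∧ j = 4 then t • stdVec9 K 7                -- [e₃,e₅] = t·e₈
  else if i = 1 ∧ j = 6 then ((2 - 5 * t) / (2 + t)) • stdVec9 K 8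
    -- [e₂,e₇] = ((2−5t)/(2+t))e₉
  else if i = 2 ∧ j = 5 then ((2 * t - 2 * t ^ 2) / (2 + t)) • stdVec9 K 8
    -- [e₃,e₆] = ((2t−2t²)/(2+t))e₉
  else if i = 3 ∧ j = 4 then ((3 * t ^ 2) / (2 + t)) • stdVec9 K 8
    -- [e₄,e₅] = (3t²/(2+t))e₉
  else 0

/-- The alternating bilinear bracket of `f₉(t)` on `K⁹`. -/
noncomputable def f9Br {K : Type} [Field K] (t : K) (x y : Fin 9 → K) : Fin 9 → K :=
  ∑ i : Fin 9, ∑ j : Fin 9,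
    (x i * y j) •
      (if (i : ℕ) < (j : ℕ) then f9Val t i j
       else if (j : ℕ) < (i : ℕ) then -f9Val t j i else 0)

/-!
Give `e_i` degree `i`: the bracket is graded, so every component of the Jacobiator below
`e₉` is free of the three top structure constants `a, b, c` of `[e₂,e₇]`, `[e₃,e₆]`, `[e₄,e₅]`
and vanishes identically. The `e₉`-component is a combination of the Jacobi conditions on the
degree-9 triples `(e₁,e₂,e₆)`, `(e₁,e₃,e₅)`, `(e₂,e₃,e₄)`, namely
`a + b = 1 - 2t`, `b + c = t`, `b = c + t a`. This linear system has determinant `-(2 + t)`,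
and the constants of `f₉(t)` are its unique solution.
-/

/-- The bracket of `f₉(t)` with the constants of `[e₂,e₇]`, `[e₃,e₆]`, `[e₄,e₅]` replaced by
`a, b, c`, written in coordinates (0-based). -/
def f9Bracket {R : Type} [CommRing R] (t a b c : R) (x y : Fin 9 → R) : Fin 9 → R :=
  ![0, 0,
    x 0 * y 1 - x 1 * y 0,
    x 0 * y 2 - x 2 * y 0,
    x 0 * y 3 - x 3 * y 0 + (x 1 * y 2 - x 2 * y 1),
    x 0 * y 4 - x 4 * y 0 + (x 1 * y 3 - x 3 * y 1),
    x 0 * y 5 - x 5 * y 0 + (1 - t) * (x 1 * y 4 - x 4 * y 1) + t * (x 2 * y 3 - x 3 * y 2),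
    x 0 * y 6 - x 6 * y 0 + (1 - 2 * t) * (x 1 * y 5 - x 5 * y 1) + t * (x 2 * y 4 - x 4 * y 2),
    x 0 * y 7 - x 7 * y 0 + a * (x 1 * y 6 - x 6 * y 1) + b * (x 2 * y 5 - x 5 * y 2)
      + c * (x 3 * y 4 - x 4 * y 3)]

theorem f9Bracket_jacobi {R : Type} [CommRing R] {t a b c : R}
    (h₁ : a + b = 1 - 2 * t) (h₂ : b + c = t) (h₃ : b = c + t * a) (x y z : Fin 9 → R) :
    f9Bracket t a b c (f9Bracket t a b c x y) z + f9Bracket t a b c (f9Bracket t a b c y z) x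
      + f9Bracket t a b c (f9Bracket t a b c z x) y = 0 := by
  let minor (i j l : Fin 9) : R := ((Matrix.of ![x, y, z]).submatrix id ![i, j, l]).det
  funext k
  induction k using Fin.lastCases with
  | last =>
    linear_combination (norm := skip) minor 0 1 5 * h₁ + minor 0 2 4 * h₂ + minor 1 2 3 * h₃
    simp only [minor, f9Bracket, Fin.reduceLast, Pi.add_apply, Pi.zero_apply, Matrix.cons_val,
      Matrix.det_fin_three, Matrix.submatrix_apply, id_eq, Matrix.of_apply]
    ring
  | cast k => fin_cases k <;> simp [f9Bracket] <;> ring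

theorem f9Br_eq_f9Bracket {K : Type} [Field K] (t : K) :
    f9Br t = f9Bracket t ((2 - 5 * t) / (2 + t)) ((2 * t - 2 * t ^ 2) / (2 + t))
      (3 * t ^ 2 / (2 + t)) := by
  funext x y k
  simp only [f9Br, Fin.sum_univ_succ, Fin.sum_univ_zero, Finset.sum_apply]
  fin_cases k <;> simp [f9Val, stdVec9, f9Bracket] <;> ring

theorem stmt_19_general {K : Type} [Field K] (t : K)
    (ht : t ≠ -2) :
    ∀ x y z : Fin 9 → K,
      f9Br t (f9Br t x y) z + f9Br t (f9Br t y z) x + f9Br t (f9Br t z x) y = 0 := by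
  have h2t : (2 : K) + t ≠ 0 := fun h => ht (by linear_combination h)
  rw [f9Br_eq_f9Bracket]
  exact f9Bracket_jacobi (by field_simp; ring) (by field_simp; ring) (by field_simp; ring)

/-- For `t ∈ K`, `t ≠ −2`, the bracket of `f₉(t)` satisfies the
Jacobi identity, hence defines a Lie algebra. -/
theorem stmt_19 {K : Type} [Field K] [CharZero K] [IsAlgClosed K] (t : K)
    (ht : t ≠ -2) :
    ∀ x y z : Fin 9 → K,
      f9Br t (f9Br t x y) z + f9Br t (f9Br t y z) x + f9Br t (f9Br t z x) y = 0 :=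
  stmt_19_general t ht
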